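/- For the parametric minimum-norm QP min (1/2)‖x‖² s.t. A₁₁x = w + Fθ, x ≥ 0 with A₁₁ of full row rank, the set Ω = {θ : A₁₁ᵀ(A₁₁A₁₁ᵀ)⁻¹(w+Fθ) ≥ 0 and A₁₀(A₁₁A₁₁ᵀ)⁻¹(w+Fθ) ≤ 0} is a convex polyhedron, and for every θ ∈ Ω, x*(θ) with nonzero part A₁₁ᵀ(A₁₁A₁₁ᵀ)⁻¹(w+Fθ) and zero part 0 satisfies the KKT conditions of the QP with multipliers λ* = (A₁₁A₁₁ᵀ)⁻¹(w+Fθ) and μ*₀ = −A₁₀(A₁₁A₁₁ᵀ)⁻¹(w+Fθ). -/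

import Mathlib

open Matrix

theorem stmt11 {m n11 n10 q : ℕ}
    (A11 : Matrix (Fin m) (Fin n11) ℝ) (A10 : Matrix (Fin m) (Fin n10) ℝ)
    (w : Fin m → ℝ) (F : Matrix (Fin m) (Fin q) ℝ)
    (hrank : A11.rank = m)
    (Ω : Set (Fin q → ℝ))
    (hΩ : Ω = {θ : Fin q → ℝ |
      (∀ j, 0 ≤ (A11ᵀ * (A11 * A11ᵀ)⁻¹).mulVec (w + F.mulVec θ) j) ∧
      (∀ j, (A10ᵀ * (A11 * A11ᵀ)⁻¹).mulVec (w + F.mulVec θ) j ≤ 0)}) :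
    Convex ℝ Ω ∧
    (∃ (k : ℕ) (a : Fin k → (Fin q → ℝ)) (β : Fin k → ℝ),
      Ω = {θ : Fin q → ℝ | ∀ i, dotProduct (a i) θ ≤ β i}) ∧
    ∀ θ ∈ Ω,
      ((A11ᵀ * (A11 * A11ᵀ)⁻¹).mulVec (w + F.mulVec θ)
          - A11ᵀ.mulVec ((A11 * A11ᵀ)⁻¹.mulVec (w + F.mulVec θ)) = 0) ∧
      (A10ᵀ.mulVec ((A11 * A11ᵀ)⁻¹.mulVec (w + F.mulVec θ))
          + (-(A10ᵀ * (A11 * A11ᵀ)⁻¹).mulVec (w + F.mulVec θ)) = 0) ∧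
      (A11.mulVec ((A11ᵀ * (A11 * A11ᵀ)⁻¹).mulVec (w + F.mulVec θ))
          = w + F.mulVec θ) ∧
      (∀ j, 0 ≤ (A11ᵀ * (A11 * A11ᵀ)⁻¹).mulVec (w + F.mulVec θ) j) ∧
      (∀ j, 0 ≤ (-(A10ᵀ * (A11 * A11ᵀ)⁻¹).mulVec (w + F.mulVec θ)) j) := by
  -- invertibility of A11 * A11ᵀ
  have hrk : (A11 * A11ᵀ).rank = m := by
    rw [Matrix.rank_self_mul_transpose]; exact hrank
  have hunit : IsUnit (A11 * A11ᵀ) := by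
    rw [← Matrix.mulVec_surjective_iff_isUnit]
    have hr : LinearMap.range (A11 * A11ᵀ).mulVecLin = ⊤ := by
      apply Submodule.eq_top_of_finrank_eq
      simpa [Matrix.rank] using hrk
    intro v
    have := hr ▸ Submodule.mem_top (R := ℝ) (x := v)
    obtain ⟨y, hy⟩ := LinearMap.mem_range.mp this
    exact ⟨y, hy⟩
  have hinv : (A11 * A11ᵀ) * (A11 * A11ᵀ)⁻¹ = 1 :=
    Matrix.mul_nonsing_inv _ (((Matrix.isUnit_iff_isUnit_det _).mp hunit))
  set N := A11ᵀ * (A11 * A11ᵀ)⁻¹ with hN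
  set P := A10ᵀ * (A11 * A11ᵀ)⁻¹ with hP
  -- polyhedron representation
  have key : Ω = {θ : Fin q → ℝ | ∀ i : Fin (n11 + n10),
      dotProduct ((Fin.addCases (fun j => -((N * F) j)) (fun j => (P * F) j) : Fin (n11+n10) → Fin q → ℝ) i) θ
      ≤ (Fin.addCases (fun j => N.mulVec w j) (fun j => -(P.mulVec w j)) : Fin (n11+n10) → ℝ) i} := by
    rw [hΩ]
    ext θ
    simp only [Set.mem_setOf_eq]
    have hexp : ∀ (p : ℕ) (M : Matrix (Fin p) (Fin n11) ℝ) (j : Fin p),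
        True := fun _ _ _ => trivial
    constructor
    · rintro ⟨h1, h2⟩ i
      refine Fin.addCases (fun j => ?_) (fun j => ?_) i
      · simp only [Fin.addCases_left]
        have := h1 j
        rw [Matrix.mulVec_add, Matrix.mulVec_mulVec] at this
        simp only [Pi.add_apply] at this
        have hdp : (N * F).mulVec θ j = dotProduct ((N * F) j) θ := rfl
        rw [hdp] at this
        rw [neg_dotProduct]
        linarith
      · simp only [Fin.addCases_right]
        have := h2 j
        rw [Matrix.mulVec_add, Matrix.mulVec_mulVec] at this
        simp only [Pi.add_apply] at this
        have hdp : (P * F).mulVec θ j = dotProduct ((P * F) j) θ := rfl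
        rw [hdp] at this
        linarith
    · intro h
      constructor
      · intro j
        have := h (Fin.castAdd n10 j)
        simp only [Fin.addCases_left] at this
        rw [neg_dotProduct] at this
        rw [Matrix.mulVec_add, Matrix.mulVec_mulVec]
        simp only [Pi.add_apply]
        have hdp : (N * F).mulVec θ j = dotProduct ((N * F) j) θ := rfl
        rw [hdp]
        linarith
      · intro j
        have := h (Fin.natAdd n11 j)
        simp only [Fin.addCases_right] at this
        rw [Matrix.mulVec_add, Matrix.mulVec_mulVec]
        simp only [Pi.add_apply]
        have hdp : (P * F).mulVec θ j = dotProduct ((P * F) j) θ := rfl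
        rw [hdp]
        linarith
  refine ⟨?_, ⟨n11 + n10, _, _, key⟩, ?_⟩
  · rw [key]
    have : {θ : Fin q → ℝ | ∀ i : Fin (n11 + n10),
        dotProduct ((Fin.addCases (fun j => -((N * F) j)) (fun j => (P * F) j) : Fin (n11+n10) → Fin q → ℝ) i) θ
        ≤ (Fin.addCases (fun j => N.mulVec w j) (fun j => -(P.mulVec w j)) : Fin (n11+n10) → ℝ) i}
        = ⋂ i : Fin (n11 + n10), {θ : Fin q → ℝ |
          dotProduct ((Fin.addCases (fun j => -((N * F) j)) (fun j => (P * F) j) : Fin (n11+n10) → Fin q → ℝ) i) θ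
          ≤ (Fin.addCases (fun j => N.mulVec w j) (fun j => -(P.mulVec w j)) : Fin (n11+n10) → ℝ) i} := by
      ext θ; simp
    rw [this]
    apply convex_iInter
    intro i
    exact convex_halfSpace_le
      ⟨fun x y => dotProduct_add _ _ _, fun c x => dotProduct_smul _ _ _⟩ _
  · intro θ hθ
    rw [hΩ] at hθ
    obtain ⟨h1, h2⟩ := hθ
    refine ⟨?_, ?_, ?_, h1, fun j => by simpa using h2 j⟩
    · rw [hN, ← Matrix.mulVec_mulVec]; simp
    · rw [hP, ← Matrix.mulVec_mulVec]; simp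
    · rw [hN, Matrix.mulVec_mulVec, ← Matrix.mul_assoc, hinv, Matrix.one_mulVec]
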